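/- (Linearity of differentiation commutes with explicit Runge-Kutta steps) Consider one step of an explicit k-stage Runge-Kutta method applied to x' = u(t, x) with C¹ vector field u: stages u_j = u(s + c_j h, x + h·Σ_{i<j} a_{j,i} u_i) and output Ψ(x) = x + h·Σ_j b_j u_j. Then the Jacobian ∇_x Ψ(x) coincides with the result of applying the same Runge-Kutta method to the augmented variational system (x' = u(t,x), J' = ∇_x u(t, x)·J) with initial condition J = I, projected onto the J-component. -/

import Mathlib

/-! The recursion defining `W` is exactly the chain rule applied to the stage equations
`U j y = u (s + c j h) (y + h ∑ A j i U i y)`. Since the scheme is explicit, stage `j` only involves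
stages `i < j`, so well-founded induction on the stage index gives `HasFDerivAt (U j) (W j) x`, and
the chain rule once more differentiates the output `y + h ∑ b j U j y`. -/

section

variable {𝕜 E ι : Type*} [NontriviallyNormedField 𝕜] [NormedAddCommGroup E] [NormedSpace 𝕜 E]
  [Fintype ι]

theorem hasFDerivAt_add_smul_sum_smul {F : ι → E → E} {F' : ι → E →L[𝕜] E} {x : E}
    (h : 𝕜) (r : ι → 𝕜) (hF : ∀ i, r i ≠ 0 → HasFDerivAt (F i) (F' i) x) :
    HasFDerivAt (fun y => y + h • ∑ i, r i • F i y)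
      (ContinuousLinearMap.id 𝕜 E + h • ∑ i, r i • F' i) x := by
  have hterm : ∀ i ∈ Finset.univ, HasFDerivAt (fun y => r i • F i y) (r i • F' i) x := by
    intro i _
    by_cases hri : r i = 0
    · simpa only [hri, zero_smul] using hasFDerivAt_const (0 : E) x
    · exact (hF i hri).const_smul (r i)
  exact (hasFDerivAt_id x).add ((HasFDerivAt.fun_sum hterm).const_smul h)

theorem hasFDerivAt_explicit_stage [LinearOrder ι] {f U : ι → E → E} {W : ι → E →L[𝕜] E}
    {A : ι → ι → 𝕜} {h : 𝕜} {x : E} (hA : ∀ j i, j ≤ i → A j i = 0)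
    (hU : ∀ j y, U j y = f j (y + h • ∑ i, A j i • U i y))
    (hf : ∀ j, DifferentiableAt 𝕜 (f j) (x + h • ∑ i, A j i • U i x))
    (hW : ∀ j, W j = (fderiv 𝕜 (f j) (x + h • ∑ i, A j i • U i x)).comp
      (ContinuousLinearMap.id 𝕜 E + h • ∑ i, A j i • W i))
    (j : ι) : HasFDerivAt (U j) (W j) x := by
  induction j using WellFoundedLT.induction with
  | _ j IH =>
    have hinner := hasFDerivAt_add_smul_sum_smul h (A j) fun i hAji =>
      IH i (lt_of_not_ge fun hji => hAji (hA j i hji))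
    rw [hW j, show U j = f j ∘ fun y => y + h • ∑ i, A j i • U i y from funext (hU j)]
    exact (hf j).hasFDerivAt.comp x hinner

end

theorem rk_step_jacobian_eq_variational_rk_general
    {d k : ℕ}
    (u : ℝ → EuclideanSpace ℝ (Fin d) → EuclideanSpace ℝ (Fin d))
    (hu : ContDiff ℝ 1 fun p : ℝ × EuclideanSpace ℝ (Fin d) => u p.1 p.2)
    (A : Fin k → Fin k → ℝ) (b c : Fin k → ℝ)
    (hexp : ∀ j i : Fin k, j ≤ i → A j i = 0)
    (s h : ℝ)
    (U : Fin k → EuclideanSpace ℝ (Fin d) → EuclideanSpace ℝ (Fin d))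
    (hU : ∀ (j : Fin k) (y : EuclideanSpace ℝ (Fin d)),
      U j y = u (s + c j * h) (y + h • ∑ i, A j i • U i y))
    (x : EuclideanSpace ℝ (Fin d))
    (W : Fin k → (EuclideanSpace ℝ (Fin d) →L[ℝ] EuclideanSpace ℝ (Fin d)))
    (hW : ∀ j : Fin k,
      W j = (fderiv ℝ (u (s + c j * h)) (x + h • ∑ i, A j i • U i x)).comp
        (ContinuousLinearMap.id ℝ (EuclideanSpace ℝ (Fin d)) + h • ∑ i, A j i • W i)) :
    fderiv ℝ (fun y => y + h • ∑ j, b j • U j y) x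
      = ContinuousLinearMap.id ℝ (EuclideanSpace ℝ (Fin d)) + h • ∑ j, b j • W j := by
  have hu_slice : ∀ t, Differentiable ℝ (u t) := fun t =>
    (hu.differentiable one_ne_zero).comp ((differentiable_const t).prodMk differentiable_id)
  have hstage := hasFDerivAt_explicit_stage (f := fun j => u (s + c j * h)) hexp hU
    (fun j => hu_slice _ _) hW
  exact (hasFDerivAt_add_smul_sum_smul h b fun j _ => hstage j).fderiv

/-- Differentiating one explicit Runge-Kutta step in the initial
condition coincides with applying the same scheme to the variational system. -/
theorem rk_step_jacobian_eq_variational_rk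
    {d k : ℕ}
    (u : ℝ → EuclideanSpace ℝ (Fin d) → EuclideanSpace ℝ (Fin d))
    (hu : ContDiff ℝ 1 fun p : ℝ × EuclideanSpace ℝ (Fin d) => u p.1 p.2)
    (A : Fin k → Fin k → ℝ) (b c : Fin k → ℝ)
    (hexp : ∀ j i : Fin k, j ≤ i → A j i = 0)
    (s h : ℝ) (hh : 0 < h)
    (U : Fin k → EuclideanSpace ℝ (Fin d) → EuclideanSpace ℝ (Fin d))
    (hU : ∀ (j : Fin k) (y : EuclideanSpace ℝ (Fin d)),
      U j y = u (s + c j * h) (y + h • ∑ i, A j i • U i y))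
    (hUdiff : ∀ j : Fin k, Differentiable ℝ (U j))
    (x : EuclideanSpace ℝ (Fin d))
    (W : Fin k → (EuclideanSpace ℝ (Fin d) →L[ℝ] EuclideanSpace ℝ (Fin d)))
    (hW : ∀ j : Fin k,
      W j = (fderiv ℝ (u (s + c j * h)) (x + h • ∑ i, A j i • U i x)).comp
        (ContinuousLinearMap.id ℝ (EuclideanSpace ℝ (Fin d)) + h • ∑ i, A j i • W i)) :
    fderiv ℝ (fun y => y + h • ∑ j, b j • U j y) x
      = ContinuousLinearMap.id ℝ (EuclideanSpace ℝ (Fin d)) + h • ∑ j, b j • W j :=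
  rk_step_jacobian_eq_variational_rk_general u hu A b c hexp s h U hU x W hW
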